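/- arXiv:1405.0825 — 6 statements merged into one kernel-verified Lean document; each statement's English description precedes it below -/
import Mathlib

section
/- Every weighted majority game admits a normalized representation in which every dummy voter has weight zero. -/
/-
Adding dummies to a coalition never changes its outcome, so a coalition wins iff its
non-dummy part does. Hence setting the weights of all dummies to zero in any representation
gives again a representation. Dividing quota and weights by the total weight, which is
positive because the grand coalition wins, normalizes it; the new quota is at most `1`
for the same reason.
-/

open Finset

/-- A simple game on `n` voters: monotone, with `∅` losing and the grand coalition winning. -/
def IsSimpleGame {n : ℕ} (v : Finset (Fin n) → Bool) : Prop :=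
  v ∅ = false ∧ v Finset.univ = true ∧
    ∀ S T : Finset (Fin n), S ⊆ T → v S = true → v T = true

/-- `(q, w)` is a representation of `v`: `q > 0`, nonnegative weights, and a coalition is
winning iff its total weight is at least `q` (hence losing iff strictly below `q`). -/
def IsRep {n : ℕ} (v : Finset (Fin n) → Bool) (q : ℝ) (w : Fin n → ℝ) : Prop :=
  0 < q ∧ (∀ i, 0 ≤ w i) ∧ ∀ S : Finset (Fin n), v S = true ↔ q ≤ ∑ i ∈ S, w i

/-- A weighted majority game is a simple game admitting a representation. -/
def IsWMG {n : ℕ} (v : Finset (Fin n) → Bool) : Prop :=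
  IsSimpleGame v ∧ ∃ (q : ℝ) (w : Fin n → ℝ), IsRep v q w

/-- Voter `i` is a dummy: adding `i` never changes the outcome. -/
def IsDummy {n : ℕ} (v : Finset (Fin n) → Bool) (i : Fin n) : Prop :=
  ∀ S : Finset (Fin n), i ∉ S → v (insert i S) = v S

section

variable {n : ℕ} {v : Finset (Fin n) → Bool}

lemma apply_union_of_forall_isDummy (S : Finset (Fin n)) {T : Finset (Fin n)}
    (hT : ∀ i ∈ T, IsDummy v i) : v (S ∪ T) = v S := by
  induction T using Finset.induction_on with
  | empty => rw [union_empty]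
  | insert i T _ ih =>
    rw [forall_mem_insert] at hT
    rw [union_insert]
    by_cases hi : i ∈ S ∪ T
    · rw [insert_eq_of_mem hi, ih hT.2]
    · rw [hT.1 _ hi, ih hT.2]

lemma apply_filter_not_isDummy [DecidablePred (IsDummy v)] (S : Finset (Fin n)) :
    v (S.filter fun i => ¬IsDummy v i) = v S := by
  conv_rhs => rw [← filter_union_filter_not_eq (IsDummy v) S, union_comm]
  exact (apply_union_of_forall_isDummy _ fun i hi => (mem_filter.mp hi).2).symm

lemma IsRep.ite_isDummy [DecidablePred (IsDummy v)] {q : ℝ} {w : Fin n → ℝ}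
    (h : IsRep v q w) : IsRep v q fun i => if IsDummy v i then 0 else w i := by
  obtain ⟨hq, hw, hrep⟩ := h
  refine ⟨hq, fun i => ite_nonneg le_rfl (hw i), fun S => ?_⟩
  rw [sum_ite, sum_const_zero, zero_add, ← apply_filter_not_isDummy (v := v) S]
  exact hrep _

lemma IsRep.div {q c : ℝ} {w : Fin n → ℝ} (h : IsRep v q w) (hc : 0 < c) :
    IsRep v (q / c) fun i => w i / c := by
  obtain ⟨hq, hw, hrep⟩ := h
  refine ⟨div_pos hq hc, fun i => div_nonneg (hw i) hc.le, fun S => ?_⟩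
  rw [hrep, ← sum_div, div_le_div_iff_of_pos_right hc]

lemma IsRep.normalize {q : ℝ} {w : Fin n → ℝ} (h : IsRep v q w) (huniv : v univ = true) :
    IsRep v (q / ∑ i, w i) (fun i => w i / ∑ i, w i) ∧
      (∑ i, w i / ∑ j, w j) = 1 ∧ q / ∑ i, w i ≤ 1 := by
  have hq_le : q ≤ ∑ i, w i := (h.2.2 univ).mp huniv
  have hpos : 0 < ∑ i, w i := h.1.trans_le hq_le
  exact ⟨h.div hpos, by rw [← sum_div, div_self hpos.ne'], (div_le_one hpos).mpr hq_le⟩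

end

/-- Every weighted majority game admits a normalized representation in which
every dummy voter has weight zero. -/
theorem exists_normalized_dummy_revealing_representation (n : ℕ)
    (v : Finset (Fin n) → Bool) (hv : IsWMG v) :
    ∃ (q : ℝ) (w : Fin n → ℝ), IsRep v q w ∧ (∑ i, w i) = 1 ∧ q ≤ 1 ∧
      ∀ i : Fin n, IsDummy v i → w i = 0 := by
  classical
  obtain ⟨⟨-, huniv, -⟩, q, w, hrep⟩ := hv
  obtain ⟨hrep', hsum, hq⟩ := hrep.ite_isDummy.normalize huniv
  refine ⟨_, _, hrep', hsum, hq, fun i hi => ?_⟩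
  simp [hi]
end

section
/- Every weighted majority game admits a representation (q, w_1, ..., w_n) in which q and all w_i are positive integers. -/
/-!
Since there are only finitely many coalitions, the losing ones weigh at most some `b < q`. Scaling
the representation by `M` with `M (q - b) = 2 n + 1` and adding `1` to every weight keeps the
winning coalitions at or above the quota `M q` and the losing ones more than `n` below it, so
rounding quota and weights up to integers changes no outcome.
-/

open Finset

theorem exists_lt_forall_le_of_lt {α : Type*} [Fintype α] (f : α → ℝ) (q : ℝ) :
    ∃ b < q, ∀ a, f a < q → f a ≤ b := by
  obtain hempty | hne := (univ.filter (f · < q)).eq_empty_or_nonempty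
  · refine ⟨q - 1, by linarith, fun a ha => ?_⟩
    simpa [hempty] using (filter_eq_empty_iff.mp hempty) (mem_univ a) ha
  · obtain ⟨a₀, ha₀, hmax⟩ := exists_max_image _ f hne
    exact ⟨f a₀, (mem_filter.mp ha₀).2, fun a ha => hmax a (by simpa using ha)⟩

section Coalitions

variable {ι : Type*} [Fintype ι] {win : Finset ι → Prop}

theorem exists_positive_rep_with_margin {q : ℝ} {w : ι → ℝ} (hq : 0 < q) (hw : ∀ i, 0 ≤ w i)
    (hrep : ∀ S, win S ↔ q ≤ ∑ i ∈ S, w i) :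
    ∃ (Q : ℝ) (u : ι → ℝ), 0 < Q ∧ (∀ i, 0 < u i) ∧
      ∀ S, (win S → Q ≤ ∑ i ∈ S, u i) ∧ (¬ win S → ∑ i ∈ S, u i + Fintype.card ι < Q) := by
  obtain ⟨b, hbq, hb⟩ := exists_lt_forall_le_of_lt (fun S : Finset ι => ∑ i ∈ S, w i) q
  set n : ℝ := (Fintype.card ι : ℝ)
  set M : ℝ := (2 * n + 1) / (q - b)
  have hM : 0 < M := by positivity
  have hMgap : M * (q - b) = 2 * n + 1 := div_mul_cancel₀ _ (sub_pos.mpr hbq).ne'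
  refine ⟨M * q, fun i => M * w i + 1, by positivity,
    fun i => by have := hw i; positivity, fun S => ?_⟩
  have hsum : ∑ i ∈ S, (M * w i + 1) = M * ∑ i ∈ S, w i + S.card := by
    simp only [sum_add_distrib, mul_sum, sum_const, nsmul_eq_mul, mul_one]
  have hcard : (S.card : ℝ) ≤ n := Nat.cast_le.mpr (card_le_univ S)
  rw [hsum]
  constructor
  · intro hS
    have := mul_le_mul_of_nonneg_left ((hrep S).mp hS) hM.le
    linarith [S.card.cast_nonneg (α := ℝ)]
  · intro hS
    have hlow : ∑ i ∈ S, w i ≤ b := hb S (not_le.mp (mt (hrep S).mpr hS))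
    have := mul_le_mul_of_nonneg_left hlow hM.le
    linarith

theorem ceil_rep_of_margin {Q : ℝ} {u : ι → ℝ} (hQ : 0 < Q) (hu : ∀ i, 0 < u i)
    (hmargin : ∀ S, (win S → Q ≤ ∑ i ∈ S, u i) ∧
      (¬ win S → ∑ i ∈ S, u i + Fintype.card ι < Q)) :
    0 < ⌈Q⌉₊ ∧ (∀ i, 0 < ⌈u i⌉₊) ∧ ∀ S, win S ↔ ⌈Q⌉₊ ≤ ∑ i ∈ S, ⌈u i⌉₊ := by
  refine ⟨Nat.ceil_pos.mpr hQ, fun i => Nat.ceil_pos.mpr (hu i), fun S => ?_⟩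
  by_cases hS : win S
  · simp only [hS, true_iff, Nat.ceil_le, Nat.cast_sum]
    exact ((hmargin S).1 hS).trans (sum_le_sum fun i _ => Nat.le_ceil (u i))
  · simp only [hS, false_iff, not_le, Nat.lt_ceil, Nat.cast_sum]
    calc ∑ i ∈ S, (⌈u i⌉₊ : ℝ)
        ≤ ∑ i ∈ S, (u i + 1) := sum_le_sum fun i _ => (Nat.ceil_lt_add_one (hu i).le).le
      _ = ∑ i ∈ S, u i + S.card := by simp only [sum_add_distrib, sum_const, nsmul_one]
      _ ≤ ∑ i ∈ S, u i + Fintype.card ι := by gcongr; exact card_le_univ S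
      _ < Q := (hmargin S).2 hS

end Coalitions

/-- Every weighted majority game admits a representation in which the quota and all
weights are positive integers. -/
theorem exists_positive_integer_representation (n : ℕ) (v : Finset (Fin n) → Bool)
    (hv : IsWMG v) :
    ∃ (q : ℕ) (w : Fin n → ℕ), 0 < q ∧ (∀ i, 0 < w i) ∧
      ∀ S : Finset (Fin n), v S = true ↔ q ≤ ∑ i ∈ S, w i := by
  obtain ⟨-, q, w, hq, hw, hrep⟩ := hv
  obtain ⟨Q, u, hQ, hu, hmargin⟩ := exists_positive_rep_with_margin hq hw hrep
  exact ⟨_, _, ceil_rep_of_margin hQ hu hmargin⟩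
end

section
/- For the weighted majority game v = [3; 2,1,1,1], the coalition {2,3,4} is winning and the coalition {1} is losing, yet both have total weight 1/2 under the Shapley-Shubik vector (1/2, 1/6, 1/6, 1/6); hence no quota q can make this vector a representation of v. -/
open Finset

/-- The weighted majority game `[3; 2,1,1,1]` on four voters. -/
def gameV4 : Finset (Fin 4) → Bool :=
  fun S => decide (3 ≤ ∑ i ∈ S, (![2, 1, 1, 1] : Fin 4 → ℕ) i)

/-- The Shapley-Shubik vector of `[3; 2,1,1,1]`. -/
noncomputable def ssw : Fin 4 → ℝ := ![1/2, 1/6, 1/6, 1/6]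

theorem not_exists_quota_of_sum_eq {ι R : Type*} [AddCommMonoid R] [Preorder R]
    (v : Finset ι → Bool) (w : ι → R) {S T : Finset ι} (hS : v S = true) (hT : v T = false)
    (hST : ∑ i ∈ S, w i = ∑ i ∈ T, w i) :
    ¬ ∃ q : R, ∀ U : Finset ι, v U = true ↔ q ≤ ∑ i ∈ U, w i := by
  rintro ⟨q, hq⟩
  have hT' : v T = true := (hq T).mpr (hST ▸ (hq S).mp hS)
  simp [hT] at hT'

theorem gameV4_123_eq_true : gameV4 {1, 2, 3} = true := by decide

theorem gameV4_0_eq_false : gameV4 {0} = false := by decide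

theorem sum_ssw_123 : ∑ i ∈ ({1, 2, 3} : Finset (Fin 4)), ssw i = 1 / 2 := by
  rw [sum_insert (by decide), sum_pair (by decide)]
  simp only [ssw, Matrix.cons_val]
  norm_num

theorem sum_ssw_0 : ∑ i ∈ ({0} : Finset (Fin 4)), ssw i = 1 / 2 := by
  simp [ssw]

/-- In `v = [3; 2,1,1,1]` the coalition `{2,3,4}` is winning and `{1}` is losing, yet
both have weight `1/2` under the Shapley-Shubik vector `(1/2, 1/6, 1/6, 1/6)`; hence no
quota makes this vector a representation of `v`. -/
theorem ssi_vector_not_feasible_for_gameV4 :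
    gameV4 {1, 2, 3} = true ∧ gameV4 {0} = false ∧
      (∑ i ∈ ({1, 2, 3} : Finset (Fin 4)), ssw i) = 1 / 2 ∧
      (∑ i ∈ ({0} : Finset (Fin 4)), ssw i) = 1 / 2 ∧
      ¬ ∃ q : ℝ, ∀ S : Finset (Fin 4), gameV4 S = true ↔ q ≤ ∑ i ∈ S, ssw i :=
  ⟨gameV4_123_eq_true, gameV4_0_eq_false, sum_ssw_123, sum_ssw_0,
    not_exists_quota_of_sum_eq gameV4 ssw gameV4_123_eq_true gameV4_0_eq_false
      (sum_ssw_123.trans sum_ssw_0.symm)⟩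
end

section
/- The weight polytope of every weighted majority game on n voters has positive (n−1)-dimensional volume. -/
open Finset

/-- `S` is a minimal winning coalition of `v`. -/
def MinWinning {n : ℕ} (v : Finset (Fin n) → Bool) (S : Finset (Fin n)) : Prop :=
  v S = true ∧ ∀ T : Finset (Fin n), T ⊂ S → v T = false

/-- `T` is a maximal losing coalition of `v`. -/
def MaxLosing {n : ℕ} (v : Finset (Fin n) → Bool) (T : Finset (Fin n)) : Prop :=
  v T = false ∧ ∀ S : Finset (Fin n), T ⊂ S → v S = true

/-- The (normalized) weight polytope of `v`: nonnegative weights summing to one such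
that every minimal winning coalition weighs at least as much as every maximal losing
coalition. -/
def weightPolytope {n : ℕ} (v : Finset (Fin n) → Bool) : Set (Fin n → ℝ) :=
  {w | (∀ i, 0 ≤ w i) ∧ (∑ i, w i) = 1 ∧
    ∀ S T : Finset (Fin n), MinWinning v S → MaxLosing v T →
      (∑ i ∈ T, w i) ≤ ∑ i ∈ S, w i}

/-- Embedding of the first `n` coordinates into a full weight vector on `n+1` voters,
with the last weight `1 - Σ u i`. -/
def extendWeights {n : ℕ} (u : Fin n → ℝ) : Fin (n + 1) → ℝ :=
  fun j => if h : (j : ℕ) < n then u ⟨j, h⟩ else 1 - ∑ i, u i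

/-- Projection of the weight polytope onto the first `n` coordinates (eliminating the
last weight). -/
def projWeightPolytope {n : ℕ} (v : Finset (Fin (n + 1)) → Bool) : Set (Fin n → ℝ) :=
  {u | extendWeights u ∈ weightPolytope v}

/-!
A representation `(q, w)` separates winning from losing coalitions strictly, `w(T) < q ≤ w(S)`,
and strict separation is an open condition on the weights. So adding a small positive constant to
every weight keeps the separation strict while making all weights positive; after normalising, this
gives a relative interior point of the weight polytope. Its projection is an interior point of the
projected polytope, which therefore contains a nonempty open set.
-/

lemma sum_extendWeights {n : ℕ} (u : Fin n → ℝ) : ∑ j, extendWeights u j = 1 := by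
  simp [Fin.sum_univ_castSucc, extendWeights]

lemma extendWeights_castSucc {n : ℕ} {x : Fin (n + 1) → ℝ} (hx : ∑ j, x j = 1) :
    extendWeights (fun i => x i.castSucc) = x := by
  funext j
  rw [Fin.sum_univ_castSucc] at hx
  by_cases h : (j : ℕ) < n
  · simp [extendWeights, h]
  · obtain rfl := Fin.eq_last_of_not_lt h
    simp [extendWeights]
    linarith

lemma continuous_extendWeights {n : ℕ} : Continuous (extendWeights (n := n)) := by
  refine continuous_pi fun j => ?_
  by_cases h : (j : ℕ) < n
  · simpa [extendWeights, h] using continuous_apply _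
  · simp only [extendWeights, h, dite_false]
    fun_prop

def StrictlySeparates {ι : Type*} (v : Finset ι → Bool) (x : ι → ℝ) : Prop :=
  ∀ S T : Finset ι, v S = true → v T = false → ∑ i ∈ T, x i < ∑ i ∈ S, x i

section StrictlySeparates

variable {ι : Type*} {v : Finset ι → Bool}

lemma isOpen_setOf_strictlySeparates [Finite ι] (v : Finset ι → Bool) :
    IsOpen {x : ι → ℝ | StrictlySeparates v x} := by
  simp only [StrictlySeparates, Set.ofPred_forall]
  exact isOpen_iInter_of_finite fun S => isOpen_iInter_of_finite fun T =>
    isOpen_iInter_of_finite fun _ => isOpen_iInter_of_finite fun _ =>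
      isOpen_lt (by fun_prop) (by fun_prop)

lemma StrictlySeparates.smul {x : ι → ℝ} (hx : StrictlySeparates v x) {c : ℝ} (hc : 0 < c) :
    StrictlySeparates v (c • x) := by
  intro S T hS hT
  simpa [← Finset.mul_sum] using mul_lt_mul_of_pos_left (hx S T hS hT) hc

lemma StrictlySeparates.exists_pos [Finite ι] {w : ι → ℝ} (hw : StrictlySeparates v w)
    (hw₀ : ∀ i, 0 ≤ w i) : ∃ x : ι → ℝ, (∀ i, 0 < x i) ∧ StrictlySeparates v x := by
  have hlim : Filter.Tendsto (fun t : ℝ => w + t • (1 : ι → ℝ)) (nhdsWithin 0 (Set.Ioi 0))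
      (nhds w) :=
    ((by fun_prop : Continuous fun t : ℝ => w + t • (1 : ι → ℝ)).tendsto' 0 w
      (by simp)).mono_left nhdsWithin_le_nhds
  obtain ⟨t, hsep, ht⟩ := ((hlim.eventually
    ((isOpen_setOf_strictlySeparates v).mem_nhds hw)).and self_mem_nhdsWithin).exists
  exact ⟨_, fun i => by simpa using add_pos_of_nonneg_of_pos (hw₀ i) ht, hsep⟩

lemma StrictlySeparates.exists_sum_eq_one [Fintype ι] [Nonempty ι] {x : ι → ℝ}
    (hx : StrictlySeparates v x) (hpos : ∀ i, 0 < x i) :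
    ∃ y : ι → ℝ, (∀ i, 0 < y i) ∧ StrictlySeparates v y ∧ ∑ i, y i = 1 := by
  have hsum : 0 < ∑ i, x i := Finset.sum_pos (fun i _ => hpos i) Finset.univ_nonempty
  refine ⟨(∑ i, x i)⁻¹ • x, fun i => ?_, hx.smul (inv_pos.2 hsum), ?_⟩
  · simpa using mul_pos (inv_pos.2 hsum) (hpos i)
  · simp [← Finset.mul_sum, hsum.ne']

end StrictlySeparates

lemma IsRep.strictlySeparates {n : ℕ} {v : Finset (Fin n) → Bool} {q : ℝ} {w : Fin n → ℝ}
    (h : IsRep v q w) : StrictlySeparates v w := by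
  intro S T hS hT
  have hT' : ¬ q ≤ ∑ i ∈ T, w i := by simpa [hT] using (h.2.2 T).not
  exact (not_le.1 hT').trans_le ((h.2.2 S).1 hS)

lemma mem_weightPolytope_of_strictlySeparates {n : ℕ} {v : Finset (Fin n) → Bool}
    {x : Fin n → ℝ} (hx₀ : ∀ i, 0 ≤ x i) (hx₁ : ∑ i, x i = 1) (hx : StrictlySeparates v x) :
    x ∈ weightPolytope v :=
  ⟨hx₀, hx₁, fun S T hS hT => (hx S T hS.1 hT.1).le⟩

open MeasureTheory in
/-- The weight polytope of every weighted majority game on `n+1` voters has positive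
`n`-dimensional volume (Lebesgue measure of its projection onto the first `n`
coordinates). -/
theorem weightPolytope_pos_volume (n : ℕ) (v : Finset (Fin (n + 1)) → Bool)
    (hv : IsWMG v) : 0 < volume (projWeightPolytope v) := by
  obtain ⟨-, q, w, hrep⟩ := hv
  obtain ⟨x₀, hx₀_pos, hx₀⟩ := hrep.strictlySeparates.exists_pos hrep.2.1
  obtain ⟨x, hx_pos, hx, hx_sum⟩ := hx₀.exists_sum_eq_one hx₀_pos
  set U : Set (Fin n → ℝ) :=
    extendWeights ⁻¹' (Set.univ.pi (fun _ => Set.Ioi 0) ∩ {y | StrictlySeparates v y}) with hU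
  have hU_open : IsOpen U :=
    ((isOpen_set_pi Set.finite_univ fun _ _ => isOpen_Ioi).inter
      (isOpen_setOf_strictlySeparates v)).preimage continuous_extendWeights
  have hU_mem : (fun i => x i.castSucc) ∈ U := by
    simpa [hU, extendWeights_castSucc hx_sum] using ⟨hx_pos, hx⟩
  have hU_sub : U ⊆ projWeightPolytope v := fun u hu =>
    mem_weightPolytope_of_strictlySeparates (fun i => (hu.1 i (Set.mem_univ i)).le)
      (sum_extendWeights u) hu.2
  exact (hU_open.measure_pos volume ⟨_, hU_mem⟩).trans_le (measure_mono hU_sub)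
end

section
/- The average weight index does not satisfy the dummy property: in the weighted majority game [1; 1, 0] on two voters, voter 2 is a dummy but receives average weight index 1/4 > 0 (the average weight index of this game is (3/4, 1/4)). -/
open Finset

open MeasureTheory in
/-- The average weight index of `v`: the centroid of the weight polytope, computed via
its full-dimensional projection. -/
noncomputable def avgWeightIndex {n : ℕ} (v : Finset (Fin (n + 1)) → Bool)
    (i : Fin (n + 1)) : ℝ :=
  (∫ u in projWeightPolytope v, extendWeights u i) /
    (volume (projWeightPolytope v)).toReal

/-- The weighted majority game `[1; 1, 0]` on two voters. -/
def gameOneZero : Finset (Fin 2) → Bool :=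
  fun S => decide (1 ≤ ∑ i ∈ S, (![1, 0] : Fin 2 → ℕ) i)

/-! The only constraint `w 1 ≤ w 0` that the weight polytope of `[1; 1, 0]` imposes does not
force the dummy's weight to vanish: the polytope is the segment `w 0 ∈ [1/2, 1]`, and the
centroid of a segment is its midpoint `(3/4, 1/4)`. -/

lemma extendWeights_fin_one (u : Fin 1 → ℝ) : extendWeights u = ![u 0, 1 - u 0] := by
  funext j
  fin_cases j <;> simp [extendWeights]

lemma weightPolytope_eq_of_unique_minWinning_maxLosing {n : ℕ} {v : Finset (Fin n) → Bool}
    {S T : Finset (Fin n)} (hS : ∀ S', MinWinning v S' ↔ S' = S)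
    (hT : ∀ T', MaxLosing v T' ↔ T' = T) :
    weightPolytope v =
      {w | (∀ i, 0 ≤ w i) ∧ ∑ i, w i = 1 ∧ ∑ i ∈ T, w i ≤ ∑ i ∈ S, w i} := by
  ext w
  simp [weightPolytope, hS, hT]

lemma minWinning_gameOneZero_iff (S : Finset (Fin 2)) : MinWinning gameOneZero S ↔ S = {0} := by
  revert S; unfold MinWinning; decide

lemma maxLosing_gameOneZero_iff (T : Finset (Fin 2)) : MaxLosing gameOneZero T ↔ T = {1} := by
  revert T; unfold MaxLosing; decide

lemma isDummy_gameOneZero_one : IsDummy gameOneZero 1 := by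
  unfold IsDummy; decide

lemma projWeightPolytope_gameOneZero :
    projWeightPolytope gameOneZero = MeasurableEquiv.funUnique (Fin 1) ℝ ⁻¹' Set.Icc (1 / 2) 1 := by
  ext u
  simp only [projWeightPolytope, Set.mem_ofPred_eq, extendWeights_fin_one,
    weightPolytope_eq_of_unique_minWinning_maxLosing minWinning_gameOneZero_iff
      maxLosing_gameOneZero_iff, Fin.forall_fin_two, Fin.sum_univ_two, sum_singleton,
    Set.mem_preimage, MeasurableEquiv.funUnique_apply, Set.mem_Icc, Matrix.cons_val_zero,
    Matrix.cons_val_one, Fin.default_eq_zero, add_sub_cancel, true_and]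
  constructor
  · rintro ⟨⟨h0, h1⟩, hle⟩
    constructor <;> linarith
  · rintro ⟨hlo, hhi⟩
    refine ⟨⟨?_, ?_⟩, ?_⟩ <;> linarith

open MeasureTheory intervalIntegral in
lemma setIntegral_funUnique_preimage_Icc (g : ℝ → ℝ) (a b : ℝ) (hab : a ≤ b) :
    ∫ u in MeasurableEquiv.funUnique (Fin 1) ℝ ⁻¹' Set.Icc a b, g (u 0) = ∫ x in a..b, g x := by
  rw [integral_of_le hab, ← integral_Icc_eq_integral_Ioc]
  exact (volume_preserving_funUnique (Fin 1) ℝ).setIntegral_preimage_emb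
    (MeasurableEquiv.funUnique (Fin 1) ℝ).measurableEmbedding g _

open MeasureTheory in
lemma volume_funUnique_preimage_Icc (a b : ℝ) :
    volume (MeasurableEquiv.funUnique (Fin 1) ℝ ⁻¹' Set.Icc a b) = ENNReal.ofReal (b - a) := by
  rw [← Real.volume_Icc]
  exact (volume_preserving_funUnique (Fin 1) ℝ).measure_preimage
    measurableSet_Icc.nullMeasurableSet

open intervalIntegral in
lemma avgWeightIndex_of_projWeightPolytope_eq_Icc {v : Finset (Fin 2) → Bool} {a b : ℝ}
    (hab : a < b)
    (hv : projWeightPolytope v = MeasurableEquiv.funUnique (Fin 1) ℝ ⁻¹' Set.Icc a b) :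
    avgWeightIndex v 0 = (a + b) / 2 ∧ avgWeightIndex v 1 = 1 - (a + b) / 2 := by
  have hvol : (MeasureTheory.volume (projWeightPolytope v)).toReal = b - a := by
    rw [hv, volume_funUnique_preimage_Icc, ENNReal.toReal_ofReal (by linarith)]
  have hba : b - a ≠ 0 := by linarith
  simp only [avgWeightIndex, hvol]
  simp only [extendWeights_fin_one, Matrix.cons_val_zero, Matrix.cons_val_one, hv,
    setIntegral_funUnique_preimage_Icc _ a b hab.le,
    setIntegral_funUnique_preimage_Icc (fun x => x) a b hab.le]
  rw [integral_id, integral_sub intervalIntegrable_const intervalIntegrable_id, integral_id,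
    integral_const]
  constructor <;> field_simp <;> ring

/-- The average weight index violates the dummy property: in `[1; 1, 0]` voter `2` is a
dummy, yet the average weight index is `(3/4, 1/4)`, giving the dummy positive power. -/
theorem avgWeightIndex_fails_dummy_property :
    IsDummy gameOneZero 1 ∧ avgWeightIndex gameOneZero 0 = 3 / 4 ∧
      avgWeightIndex gameOneZero 1 = 1 / 4 ∧ 0 < avgWeightIndex gameOneZero 1 := by
  obtain ⟨h0, h1⟩ :=
    avgWeightIndex_of_projWeightPolytope_eq_Icc (by norm_num) projWeightPolytope_gameOneZero
  norm_num at h0 h1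
  exact ⟨isDummy_gameOneZero_one, h0, h1, by rw [h1]; norm_num⟩
end

section
/- A weighted majority game and its dual game have the same weight polytope, and hence the same average weight index. -/
open Finset

/-- The dual game `v*`, with `v*(S) = 1 - v(N \ S)`. -/
def dualGame {n : ℕ} (v : Finset (Fin n) → Bool) : Finset (Fin n) → Bool :=
  fun S => !v Sᶜ

/-! Complementation maps the minimal winning coalitions of `v*` onto the maximal losing
coalitions of `v` and vice versa, and for weights summing to one `w(Sᶜ) = 1 - w(S)`, so the
defining inequality `w(T) ≤ w(S)` of one polytope is that of the other, read for `Sᶜ, Tᶜ`.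
The average weight index depends on the game only through its weight polytope. -/

@[simp]
lemma dualGame_dualGame {n : ℕ} (v : Finset (Fin n) → Bool) : dualGame (dualGame v) = v := by
  funext S
  simp [dualGame]

lemma minWinning_dualGame_iff {n : ℕ} (v : Finset (Fin n) → Bool) (S : Finset (Fin n)) :
    MinWinning (dualGame v) S ↔ MaxLosing v Sᶜ := by
  simp only [MinWinning, MaxLosing, dualGame, Bool.not_eq_true', Bool.not_eq_false']
  refine and_congr_right fun _ => ?_
  rw [compl_surjective.forall (p := fun U => Sᶜ ⊂ U → v U = true)]
  simp only [compl_ssubset_compl]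

lemma maxLosing_dualGame_iff {n : ℕ} (v : Finset (Fin n) → Bool) (T : Finset (Fin n)) :
    MaxLosing (dualGame v) T ↔ MinWinning v Tᶜ := by
  rw [← compl_compl T, ← minWinning_dualGame_iff, dualGame_dualGame, compl_compl]

lemma sum_compl_eq_one_sub {n : ℕ} {w : Fin n → ℝ} (hw : ∑ i, w i = 1) (S : Finset (Fin n)) :
    ∑ i ∈ Sᶜ, w i = 1 - ∑ i ∈ S, w i := by
  rw [← hw, ← sum_add_sum_compl S w, add_sub_cancel_left]

lemma weightPolytope_subset_dualGame {n : ℕ} (v : Finset (Fin n) → Bool) :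
    weightPolytope v ⊆ weightPolytope (dualGame v) := by
  rintro w ⟨hw_nonneg, hw_sum, hw_le⟩
  refine ⟨hw_nonneg, hw_sum, fun S T hS hT => ?_⟩
  have := hw_le Tᶜ Sᶜ ((maxLosing_dualGame_iff v T).1 hT) ((minWinning_dualGame_iff v S).1 hS)
  rw [sum_compl_eq_one_sub hw_sum, sum_compl_eq_one_sub hw_sum] at this
  linarith

lemma weightPolytope_dualGame {n : ℕ} (v : Finset (Fin n) → Bool) :
    weightPolytope (dualGame v) = weightPolytope v := by
  refine (weightPolytope_subset_dualGame v).antisymm' ?_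
  simpa using weightPolytope_subset_dualGame (dualGame v)

lemma avgWeightIndex_eq_of_weightPolytope_eq {n : ℕ} {v v' : Finset (Fin (n + 1)) → Bool}
    (h : weightPolytope v = weightPolytope v') : avgWeightIndex v = avgWeightIndex v' := by
  funext i
  simp only [avgWeightIndex, projWeightPolytope, h]

theorem dualGame_same_weightPolytope_and_avgWeightIndex_general (n : ℕ)
    (v : Finset (Fin (n + 1)) → Bool) :
    weightPolytope (dualGame v) = weightPolytope v ∧
      ∀ i : Fin (n + 1), avgWeightIndex (dualGame v) i = avgWeightIndex v i :=
  ⟨weightPolytope_dualGame v,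
    congrFun (avgWeightIndex_eq_of_weightPolytope_eq (weightPolytope_dualGame v))⟩

/-- A weighted majority game and its dual have the same weight polytope, and hence the
same average weight index. -/
theorem dualGame_same_weightPolytope_and_avgWeightIndex (n : ℕ)
    (v : Finset (Fin (n + 1)) → Bool) (hv : IsWMG v) :
    weightPolytope (dualGame v) = weightPolytope v ∧
      ∀ i : Fin (n + 1), avgWeightIndex (dualGame v) i = avgWeightIndex v i :=
  dualGame_same_weightPolytope_and_avgWeightIndex_general n v
end
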